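/- arXiv:1707.04285 — 3 statements merged into one kernel-verified Lean document; each statement's English description precedes it below -/
import Mathlib

section
/- Almost surely, there exist constants 0 < c ≤ C (depending on the sample point) such that c·n^{−α} ≤ Y_n ≤ C·n^{−α} for all n ≥ 1. -/
/-!
The centred partial sums `∑_{k<n} (E_k - α/(k+1))` have independent increments with variances
`α²/(k+1)²`, so they form an `L²`-bounded martingale; by the martingale convergence theorem they
converge, hence stay bounded, almost surely. Since `∑_{k<n} α/(k+1) = α log n + O(1)`, this gives
`-log Y_n = α log n + O(1)`.
-/

open MeasureTheory ProbabilityTheory Filter Set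
open scoped ENNReal Nat Topology

lemma exponentialPDFReal_eq_indicator (r : ℝ) :
    exponentialPDFReal r = (Ici 0).indicator fun x => r * Real.exp (-(r * x)) := by
  ext x
  simp [exponentialPDFReal, gammaPDFReal, indicator]

lemma expMeasure_eq_withDensity (r : ℝ) :
    expMeasure r = volume.withDensity fun x => ENNReal.ofReal (exponentialPDFReal r x) :=
  rfl

lemma exponentialPDFReal_mul_eq_indicator {r : ℝ} (hr : 0 < r) (g : ℝ → ℝ) (x : ℝ) :
    (ENNReal.ofReal (exponentialPDFReal r x)).toReal • g x
      = (Ici 0).indicator (fun x => r * Real.exp (-(r * x)) * g x) x := by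
  rw [ENNReal.toReal_ofReal (exponentialPDFReal_nonneg hr x), smul_eq_mul,
    exponentialPDFReal_eq_indicator]
  by_cases hx : 0 ≤ x <;> simp [hx]

lemma integrable_expMeasure_iff {r : ℝ} (hr : 0 < r) {g : ℝ → ℝ} :
    Integrable g (expMeasure r) ↔
      IntegrableOn (fun x => r * Real.exp (-(r * x)) * g x) (Ioi 0) := by
  rw [expMeasure_eq_withDensity, integrable_withDensity_iff_integrable_smul'
    (measurable_exponentialPDFReal r).ennreal_ofReal (ae_of_all _ fun _ => ENNReal.ofReal_lt_top)]
  simp only [exponentialPDFReal_mul_eq_indicator hr, integrable_indicator_iff measurableSet_Ici]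
  exact integrableOn_Ici_iff_integrableOn_Ioi

lemma integral_expMeasure {r : ℝ} (hr : 0 < r) (g : ℝ → ℝ) :
    ∫ x, g x ∂expMeasure r = ∫ x in Ioi 0, r * Real.exp (-(r * x)) * g x := by
  rw [expMeasure_eq_withDensity, integral_withDensity_eq_integral_toReal_smul
    (measurable_exponentialPDFReal r).ennreal_ofReal (ae_of_all _ fun _ => ENNReal.ofReal_lt_top)]
  simp only [exponentialPDFReal_mul_eq_indicator hr]
  rw [integral_indicator measurableSet_Ici, integral_Ici_eq_integral_Ioi]

lemma integrable_pow_expMeasure {r : ℝ} (hr : 0 < r) (n : ℕ) :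
    Integrable (fun x => x ^ n) (expMeasure r) := by
  rw [integrable_expMeasure_iff hr]
  have h := integrableOn_rpow_mul_exp_neg_mul_rpow (s := n)
    (by linarith [n.cast_nonneg (α := ℝ)]) one_pos hr
  refine IntegrableOn.congr_fun (h.const_mul r) (fun x _ => ?_) measurableSet_Ioi
  simp only [Real.rpow_natCast, Real.rpow_one, neg_mul]
  ring

lemma integral_pow_expMeasure {r : ℝ} (hr : 0 < r) (n : ℕ) :
    ∫ x, x ^ n ∂expMeasure r = n ! / r ^ n := by
  have h := Real.integral_rpow_mul_exp_neg_mul_Ioi (a := n + 1) (by positivity) hr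
  simp only [add_sub_cancel_right, Real.rpow_natCast, Real.Gamma_nat_eq_factorial] at h
  simp_rw [integral_expMeasure hr, mul_assoc, integral_const_mul, mul_comm (Real.exp _), h,
    ← Nat.cast_succ, Real.rpow_natCast, one_div, inv_pow, pow_succ]
  field_simp

lemma ProbabilityTheory.HasLaw.memLp {Ω : Type*} {m : MeasurableSpace Ω} {μ : Measure Ω}
    {ν : Measure ℝ} {X : Ω → ℝ} {p : ℝ≥0∞} (hX : HasLaw X ν μ) (h : MemLp id p ν) :
    MemLp X p μ := by
  rw [← hX.map_eq] at h
  exact (memLp_map_measure_iff aestronglyMeasurable_id hX.aemeasurable).mp h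

lemma memLp_id_expMeasure {r : ℝ} (hr : 0 < r) : MemLp id 2 (expMeasure r) :=
  (memLp_two_iff_integrable_sq aestronglyMeasurable_id).mpr (integrable_pow_expMeasure hr 2)

lemma integral_id_expMeasure {r : ℝ} (hr : 0 < r) : ∫ x, x ∂expMeasure r = r⁻¹ := by
  simpa using integral_pow_expMeasure hr 1

lemma variance_id_expMeasure {r : ℝ} (hr : 0 < r) : Var[id; expMeasure r] = (r ^ 2)⁻¹ := by
  have := isProbabilityMeasure_expMeasure hr
  rw [variance_eq_sub (memLp_id_expMeasure hr)]
  simp only [Pi.pow_apply, id, integral_pow_expMeasure hr 2, integral_id_expMeasure hr]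
  field_simp
  norm_num

section Independent

variable {Ω : Type*} {m : MeasurableSpace Ω} {μ : Measure Ω}

lemma eLpNorm_one_le_sqrt_integral_sq [IsProbabilityMeasure μ] {X : Ω → ℝ} (hX : MemLp X 2 μ) :
    eLpNorm X 1 μ ≤ ENNReal.ofReal √(∫ ω, X ω ^ 2 ∂μ) := by
  have hjensen : (∫ ω, |X ω| ∂μ) ^ 2 ≤ ∫ ω, X ω ^ 2 ∂μ := by
    have h := variance_nonneg |X| μ
    rw [variance_eq_sub hX.abs] at h
    simpa [sq_abs] using h
  rw [eLpNorm_one_eq_lintegral_enorm, ← ofReal_integral_norm_eq_lintegral_enorm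
    (hX.integrable one_le_two)]
  exact ENNReal.ofReal_le_ofReal ((le_abs_self _).trans (Real.abs_le_sqrt hjensen))

theorem ProbabilityTheory.iIndepFun.martingale_sum_range_succ {X : ℕ → Ω → ℝ}
    (hX : ∀ k, StronglyMeasurable (X k)) (hind : iIndepFun X μ) (hint : ∀ k, Integrable (X k) μ)
    (hmean : ∀ k, μ[X k] = 0) :
    Martingale (fun n ω => ∑ k ∈ Finset.range (n + 1), X k ω) (Filtration.natural X hX) μ := by
  have := hind.isProbabilityMeasure
  refine martingale_of_condExp_sub_eq_zero_nat (fun n => ?_)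
    (fun n => integrable_finsetSum _ fun k _ => hint k) (fun n => ?_)
  · exact Finset.stronglyMeasurable_fun_sum _ fun k hk =>
      (Filtration.stronglyAdapted_natural hX k).mono
        ((Filtration.natural X hX).mono (Nat.lt_succ_iff.mp (Finset.mem_range.mp hk)))
  · have hstep : (fun ω => ∑ k ∈ Finset.range (n + 1 + 1), X k ω)
        - (fun ω => ∑ k ∈ Finset.range (n + 1), X k ω) = X (n + 1) := by
      ext ω
      simp [Finset.sum_range_succ _ (n + 1)]
    rw [hstep]
    filter_upwards [hind.condExp_natural_ae_eq_of_lt hX n.lt_succ_self] with ω hω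
    rw [hω, hmean]
    rfl

lemma ProbabilityTheory.iIndepFun.integral_sq_sum_le_tsum_variance {X : ℕ → Ω → ℝ}
    (hind : iIndepFun X μ) (hL2 : ∀ k, MemLp (X k) 2 μ) (hmean : ∀ k, μ[X k] = 0)
    (hvar : Summable fun k => Var[X k; μ]) (s : Finset ℕ) :
    ∫ ω, (∑ k ∈ s, X k ω) ^ 2 ∂μ ≤ ∑' k, Var[X k; μ] := by
  have := hind.isProbabilityMeasure
  have hS : MemLp (∑ k ∈ s, X k) 2 μ := memLp_finsetSum' _ fun k _ => hL2 k
  calc ∫ ω, (∑ k ∈ s, X k ω) ^ 2 ∂μ = Var[∑ k ∈ s, X k; μ] := by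
        rw [variance_of_integral_eq_zero hS.aemeasurable]
        · simp [Finset.sum_apply]
        · simp [Finset.sum_apply, integral_finsetSum _ fun k _ => (hL2 k).integrable one_le_two,
            hmean]
    _ = ∑ k ∈ s, Var[X k; μ] :=
        IndepFun.variance_sum (fun k _ => hL2 k) fun i _ j _ hij => hind.indepFun hij
    _ ≤ ∑' k, Var[X k; μ] := hvar.sum_le_tsum _ fun k _ => variance_nonneg _ _

theorem ProbabilityTheory.iIndepFun.ae_tendsto_sum_range_of_integral_eq_zero {X : ℕ → Ω → ℝ}
    (hX : ∀ k, StronglyMeasurable (X k)) (hind : iIndepFun X μ) (hL2 : ∀ k, MemLp (X k) 2 μ)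
    (hmean : ∀ k, μ[X k] = 0) (hvar : Summable fun k => Var[X k; μ]) :
    ∀ᵐ ω ∂μ, ∃ c, Tendsto (fun n => ∑ k ∈ Finset.range n, X k ω) atTop (𝓝 c) := by
  have := hind.isProbabilityMeasure
  have hM := hind.martingale_sum_range_succ hX (fun k => (hL2 k).integrable one_le_two) hmean
  have hbdd : ∀ n, eLpNorm (fun ω => ∑ k ∈ Finset.range (n + 1), X k ω) 1 μ
      ≤ (√(∑' k, Var[X k; μ])).toNNReal := fun n =>
    (eLpNorm_one_le_sqrt_integral_sq (memLp_finsetSum _ fun k _ => hL2 k)).trans <|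
      ENNReal.ofReal_le_ofReal <| Real.sqrt_le_sqrt <|
        hind.integral_sq_sum_le_tsum_variance hL2 hmean hvar _
  filter_upwards [hM.submartingale.exists_ae_tendsto_of_bdd hbdd] with ω ⟨c, hc⟩
  exact ⟨c, (tendsto_add_atTop_iff_nat 1).mp hc⟩

/-- **Kolmogorov's one-series theorem**. -/
theorem ProbabilityTheory.iIndepFun.ae_tendsto_sum_range_sub_integral {X : ℕ → Ω → ℝ}
    (hX : ∀ k, Measurable (X k)) (hind : iIndepFun X μ) (hL2 : ∀ k, MemLp (X k) 2 μ)
    (hvar : Summable fun k => Var[X k; μ]) :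
    ∀ᵐ ω ∂μ, ∃ c, Tendsto (fun n => ∑ k ∈ Finset.range n, (X k ω - μ[X k])) atTop (𝓝 c) := by
  have := hind.isProbabilityMeasure
  have hcentered : iIndepFun (fun k ω => X k ω - μ[X k]) μ :=
    hind.comp (fun k (x : ℝ) => x - ∫ ω, X k ω ∂μ) fun k => measurable_sub_const _
  refine hcentered.ae_tendsto_sum_range_of_integral_eq_zero
    (fun k => ((hX k).sub_const _).stronglyMeasurable) (fun k => (hL2 k).sub (memLp_const _))
    (fun k => ?_) ?_
  · simp [integral_sub ((hL2 k).integrable one_le_two) (integrable_const _)]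
  · simpa only [variance_sub_const (hX _).aestronglyMeasurable] using hvar

end Independent

lemma sum_range_inv_succ_eq_harmonic (m : ℕ) :
    ∑ k ∈ Finset.range m, ((k : ℝ) + 1)⁻¹ = harmonic m := by
  simp [harmonic]

lemma log_succ_le_sum_range_inv_succ (m : ℕ) :
    Real.log (m + 1) ≤ ∑ k ∈ Finset.range m, ((k : ℝ) + 1)⁻¹ := by
  simpa [sum_range_inv_succ_eq_harmonic] using log_add_one_le_harmonic m

lemma sum_range_inv_succ_le_one_add_log_succ (m : ℕ) :
    ∑ k ∈ Finset.range m, ((k : ℝ) + 1)⁻¹ ≤ 1 + Real.log (m + 1) := by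
  rw [sum_range_inv_succ_eq_harmonic]
  refine (harmonic_le_one_add_log m).trans ?_
  rcases m.eq_zero_or_pos with rfl | hm
  · simp
  · gcongr
    linarith

theorem exp_neg_sum_range_bounds {α B : ℝ} (hα : 0 ≤ α) (e : ℕ → ℝ) (m : ℕ)
    (hB : |∑ k ∈ Finset.range m, (e k - α / (k + 1))| ≤ B) :
    Real.exp (-(B + α)) * ((m : ℝ) + 1) ^ (-α) ≤ Real.exp (-∑ k ∈ Finset.range m, e k) ∧
      Real.exp (-∑ k ∈ Finset.range m, e k) ≤ Real.exp B * ((m : ℝ) + 1) ^ (-α) := by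
  have hsplit : ∑ k ∈ Finset.range m, e k
      = ∑ k ∈ Finset.range m, (e k - α / (k + 1)) + α * ∑ k ∈ Finset.range m, ((k : ℝ) + 1)⁻¹ := by
    simp [Finset.sum_sub_distrib, Finset.mul_sum, div_eq_mul_inv]
  have hlow := mul_le_mul_of_nonneg_left (log_succ_le_sum_range_inv_succ m) hα
  have hupp := mul_le_mul_of_nonneg_left (sum_range_inv_succ_le_one_add_log_succ m) hα
  obtain ⟨hB₁, hB₂⟩ := abs_le.mp hB
  rw [Real.rpow_def_of_pos (by positivity), ← Real.exp_add, ← Real.exp_add, hsplit]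
  constructor <;> gcongr <;> linarith

/-- `E k` stands for the variable `E_{k+1}` of rate `(k+1)/α`. -/
theorem atlas_ranked_values_power_law_bounds
    {Ω : Type*} [MeasureSpace Ω] [IsProbabilityMeasure (ℙ : Measure Ω)]
    (α : ℝ) (hα : 0 < α) (E : ℕ → Ω → ℝ)
    (hmeas : ∀ k, Measurable (E k))
    (hindep : iIndepFun E ℙ)
    (hdist : ∀ k : ℕ, Measure.map (E k) ℙ = expMeasure ((k + 1) / α))
    (Y : ℕ → Ω → ℝ)
    (hY : ∀ n : ℕ, ∀ ω, Y n ω = Real.exp (-(∑ k ∈ Finset.range (n - 1), E k ω))) :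
    ∀ᵐ ω ∂(ℙ : Measure Ω), ∃ c C : ℝ, 0 < c ∧ c ≤ C ∧ ∀ n : ℕ, 1 ≤ n →
      c * (n : ℝ) ^ (-α) ≤ Y n ω ∧ Y n ω ≤ C * (n : ℝ) ^ (-α) := by
  have hrate : ∀ k : ℕ, 0 < ((k : ℝ) + 1) / α := fun k => by positivity
  have hlaw : ∀ k, HasLaw (E k) (expMeasure ((k + 1) / α)) ℙ :=
    fun k => ⟨(hmeas k).aemeasurable, hdist k⟩
  have hmean : ∀ k : ℕ, ℙ[E k] = α / (k + 1) := fun k => by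
    rw [(hlaw k).integral_eq, integral_id_expMeasure (hrate k), inv_div]
  have hvar : Summable fun k => Var[E k; ℙ] := by
    have hvar_eq : ∀ k : ℕ, Var[E k; ℙ] = α ^ 2 * (1 / ((k + 1 : ℕ) : ℝ) ^ 2) := fun k => by
      rw [(hlaw k).variance_eq, variance_id_expMeasure (hrate k)]
      push_cast
      field_simp
    simp_rw [hvar_eq]
    exact ((summable_nat_add_iff 1).mpr (Real.summable_one_div_nat_pow.mpr one_lt_two)).mul_left _
  filter_upwards [iIndepFun.ae_tendsto_sum_range_sub_integral hmeas hindep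
    (fun k => (hlaw k).memLp (memLp_id_expMeasure (hrate k))) hvar] with ω ⟨L, hL⟩
  obtain ⟨B, hB⟩ := isBounded_iff_forall_norm_le.mp (Metric.isBounded_range_of_tendsto _ hL)
  have hdev : ∀ m, |∑ k ∈ Finset.range m, (E k ω - α / (k + 1))| ≤ B := fun m => by
    simpa [hmean] using hB _ (mem_range_self m)
  have hB₀ : 0 ≤ B := by simpa using hdev 0
  refine ⟨Real.exp (-(B + α)), Real.exp B, Real.exp_pos _, by gcongr; linarith, ?_⟩
  rintro n hn
  obtain ⟨m, rfl⟩ := Nat.exists_eq_add_of_le' hn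
  rw [hY, Nat.add_sub_cancel, Nat.cast_succ]
  exact exp_neg_sum_range_bounds hα.le (fun k => E k ω) m (hdev m)
end

section
/- The expectations converge: lim_{n→∞} E[ n·Y_n/(Y_1 + Y_2 + ⋯ + Y_n) ] = 0. -/
/-!
Write `Y_k / Y_n = exp (E_{k-1} + ⋯ + E_{n-2})`. Since `E[exp (t E_j)] = (j + 1) / (j + 1 - t)`,
independence makes the moments of `W = ∑_{3 ≤ k < n} Y_k / Y_n` telescoping products: its mean
is `m = (n - 1) (1/2 + ⋯ + 1/(n - 2)) ≍ n log n`, and Cauchy–Schwarz bounds its second moment by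
`m (m + n)`. By Chebyshev, `W ≤ m / 2` has probability `O(1 / log n)`; there the ratio
`n Y_n / (Y_1 + ⋯ + Y_n)` is at most `1` because `Y` is nonincreasing, and elsewhere it is at
most `n / W ≤ 2 n / m = O(1 / log n)`.
-/

open MeasureTheory ProbabilityTheory Filter Real Finset

section ExponentialMoments

variable {r t : ℝ}

lemma lintegral_ofReal_exp_mul_expMeasure (hr : 0 ≤ r) (ht : t < r) :
    ∫⁻ x, ENNReal.ofReal (exp (t * x)) ∂expMeasure r = ENNReal.ofReal (r / (r - t)) := by
  have hrt : 0 < r - t := sub_pos.mpr ht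
  -- `exp (t x)` times the density of rate `r` is `r / (r - t)` times the density of rate `r - t`
  have tilt : ∀ x, exponentialPDF r x * ENNReal.ofReal (exp (t * x))
      = ENNReal.ofReal (r / (r - t)) * exponentialPDF (r - t) x := by
    intro x
    rcases lt_or_ge x 0 with hx | hx
    · simp [exponentialPDF_of_neg hx]
    · rw [exponentialPDF_of_nonneg hx, exponentialPDF_of_nonneg hx,
        ← ENNReal.ofReal_mul (by positivity), ← ENNReal.ofReal_mul (by positivity)]
      congr 1
      rw [div_mul_eq_mul_div, mul_div_assoc, mul_div_cancel_left₀ _ hrt.ne', mul_assoc,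
        ← exp_add]
      ring_nf
  have hpdf : Measurable (gammaPDF 1 r) := (measurable_gammaPDFReal 1 r).ennreal_ofReal
  rw [expMeasure, gammaMeasure, lintegral_withDensity_eq_lintegral_mul _ hpdf (by fun_prop)]
  change ∫⁻ x, exponentialPDF r x * _ = _
  simp_rw [tilt]
  rw [lintegral_const_mul' _ _ ENNReal.ofReal_ne_top, lintegral_exponentialPDF_eq_one hrt,
    mul_one]

lemma integrable_exp_mul_expMeasure (hr : 0 ≤ r) (ht : t < r) :
    Integrable (fun x => exp (t * x)) (expMeasure r) := by
  refine ⟨by fun_prop, ?_⟩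
  rw [hasFiniteIntegral_iff_ofReal (ae_of_all _ fun x => (exp_pos _).le),
    lintegral_ofReal_exp_mul_expMeasure hr ht]
  exact ENNReal.ofReal_lt_top

lemma mgf_id_expMeasure (hr : 0 ≤ r) (ht : t < r) : mgf id (expMeasure r) t = r / (r - t) := by
  rw [mgf, integral_eq_lintegral_of_nonneg_ae (ae_of_all _ fun x => (exp_pos _).le)
    (by fun_prop)]
  simp only [id]
  rw [lintegral_ofReal_exp_mul_expMeasure hr ht,
    ENNReal.toReal_ofReal (div_nonneg hr (sub_pos.mpr ht).le)]

lemma ae_nonneg_of_map_eq_expMeasure {Ω : Type*} [MeasurableSpace Ω] {μ : Measure Ω}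
    {X : Ω → ℝ} (hX : AEMeasurable X μ) (hdist : μ.map X = expMeasure r) : ∀ᵐ ω ∂μ, 0 ≤ X ω := by
  refine ae_of_ae_map hX ?_
  rw [hdist, ae_iff]
  simp_rw [not_le]
  change expMeasure r (Set.Iio 0) = 0
  rw [expMeasure, gammaMeasure, withDensity_apply _ measurableSet_Iio]
  exact lintegral_gammaPDF_of_nonpos le_rfl

end ExponentialMoments

section IndependentExponentials

variable {Ω : Type*} [MeasurableSpace Ω] {μ : Measure Ω} {E : ℕ → Ω → ℝ} {r : ℕ → ℝ} {t : ℝ}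
  {s : Finset ℕ}

lemma ProbabilityTheory.iIndepFun.integrable_exp_mul_sum_of_map_eq_expMeasure
    (hindep : iIndepFun E μ) (hmeas : ∀ j, Measurable (E j))
    (hdist : ∀ j, μ.map (E j) = expMeasure (r j))
    (hr : ∀ j ∈ s, 0 ≤ r j) (ht : ∀ j ∈ s, t < r j) :
    Integrable (fun ω => exp (t * ∑ j ∈ s, E j ω)) μ := by
  have := hindep.isProbabilityMeasure
  simpa only [Finset.sum_apply] using hindep.integrable_exp_mul_sum hmeas fun j hj =>
    (integrable_map_measure (g := fun x => exp (t * x)) (by fun_prop)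
      (hmeas j).aemeasurable).mp (hdist j ▸ integrable_exp_mul_expMeasure (hr j hj) (ht j hj))

lemma ProbabilityTheory.iIndepFun.integral_exp_mul_sum_of_map_eq_expMeasure
    (hindep : iIndepFun E μ) (hmeas : ∀ j, Measurable (E j))
    (hdist : ∀ j, μ.map (E j) = expMeasure (r j))
    (hr : ∀ j ∈ s, 0 ≤ r j) (ht : ∀ j ∈ s, t < r j) :
    ∫ ω, exp (t * ∑ j ∈ s, E j ω) ∂μ = ∏ j ∈ s, r j / (r j - t) := by
  have hmgf := hindep.mgf_sum (t := t) hmeas s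
  simp only [mgf, Finset.sum_apply] at hmgf
  rw [hmgf]
  refine prod_congr rfl fun j hj => ?_
  rw [← mgf, ← mgf_id_map (hmeas j).aemeasurable, hdist j, mgf_id_expMeasure (hr j hj) (ht j hj)]

end IndependentExponentials

lemma Finset.prod_Ico_div_of_ne_zero {K : Type*} [Field K] {f : ℕ → K} {a b : ℕ} (hab : a ≤ b)
    (hf : ∀ j, a ≤ j → f j ≠ 0) : ∏ j ∈ Ico a b, f (j + 1) / f j = f b / f a := by
  induction b, hab using Nat.le_induction with
  | base => simp [div_self (hf a le_rfl)]
  | succ b hab ih =>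
    rw [prod_Ico_succ_top hab, ih, mul_comm, div_mul_div_cancel₀ (hf b hab)]

lemma prod_Ico_natCast_add_one_div_sub_one {i N : ℕ} (hi : 0 < i) (hiN : i ≤ N) :
    ∏ j ∈ Ico i N, ((j : ℝ) + 1) / ((j : ℝ) + 1 - 1) = N / i := by
  have := Finset.prod_Ico_div_of_ne_zero (f := fun j : ℕ => (j : ℝ)) hiN
    (fun j hj => by simp only [ne_eq, Nat.cast_eq_zero]; omega)
  push_cast at this
  simpa using this

lemma prod_Ico_natCast_add_one_div_sub_two {i N : ℕ} (hi : 2 ≤ i) (hiN : i ≤ N) :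
    ∏ j ∈ Ico i N, ((j : ℝ) + 1) / ((j : ℝ) + 1 - 2) = N * (N - 1) / (i * (i - 1)) := by
  have hf : ∀ j : ℕ, i ≤ j → (j : ℝ) * (j - 1) ≠ 0 := fun j hj => by
    have : (2 : ℝ) ≤ j := by exact_mod_cast hi.trans hj
    exact mul_ne_zero (by positivity) (by linarith)
  rw [← Finset.prod_Ico_div_of_ne_zero (f := fun j : ℕ => (j : ℝ) * (j - 1)) hiN hf]
  refine prod_congr rfl fun j hj => ?_
  have hj0 : (j : ℝ) ≠ 0 := by
    have : (2 : ℝ) ≤ j := by exact_mod_cast hi.trans (mem_Ico.mp hj).1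
    positivity
  push_cast
  field_simp
  ring

lemma sum_Ico_two_one_div_pred_le {N : ℕ} (hN : 2 ≤ N) :
    ∑ i ∈ Ico 2 N, 1 / ((i : ℝ) - 1) ≤ 1 + ∑ i ∈ Ico 2 N, 1 / (i : ℝ) := by
  have htelescope := sum_Ico_sub (fun i : ℕ => 1 / ((i : ℝ) - 1)) hN
  have hterm : ∀ i ∈ Ico 2 N, 1 / ((i : ℝ) - 1) = 1 / (i : ℝ)
      - ((fun i : ℕ => 1 / ((i : ℝ) - 1)) (i + 1) - (fun i : ℕ => 1 / ((i : ℝ) - 1)) i) := by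
    intro i _
    push_cast
    ring_nf
  rw [sum_congr rfl hterm, sum_sub_distrib, htelescope]
  have : (0 : ℝ) ≤ 1 / ((N : ℝ) - 1) := by
    have : (2 : ℝ) ≤ N := by exact_mod_cast hN
    exact div_nonneg zero_le_one (by linarith)
  norm_num only [Nat.cast_ofNat, div_one]
  linarith

lemma tendsto_sum_Ico_two_one_div_atTop :
    Tendsto (fun N : ℕ => ∑ i ∈ Ico 2 N, 1 / (i : ℝ)) atTop atTop := by
  have hshift : ∀ N : ℕ, ∑ i ∈ Ico 2 (N + 2), 1 / (i : ℝ)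
      = ∑ i ∈ range (N + 1), 1 / ((i : ℝ) + 1) - 1 := by
    intro N
    rw [sum_Ico_eq_sum_range, sum_range_succ']
    simp only [Nat.add_sub_cancel]
    push_cast
    ring_nf
  refine (tendsto_add_atTop_iff_nat 2).mp ?_
  simp_rw [hshift]
  exact tendsto_atTop_add_const_right _ _
    (Real.tendsto_sum_range_one_div_nat_succ_atTop.comp (tendsto_add_atTop_nat 1))

lemma measureReal_le_half_le_of_integral_sq_le {Ω : Type*} [MeasurableSpace Ω] {μ : Measure Ω}
    [IsProbabilityMeasure μ] {X : Ω → ℝ} {m M : ℝ} (hX : MemLp X 2 μ) (hmean : μ[X] = m)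
    (hm : 0 < m) (hsq : ∫ ω, X ω ^ 2 ∂μ ≤ m * M) :
    μ.real {ω | X ω ≤ m / 2} ≤ 4 * (M - m) / m := by
  have hvar : variance X μ ≤ m * (M - m) := by
    rw [variance_eq_sub hX, hmean]
    simp only [Pi.pow_apply]
    linarith
  have hcheb := meas_ge_le_variance_div_sq hX (half_pos hm)
  rw [hmean] at hcheb
  calc μ.real {ω | X ω ≤ m / 2}
      ≤ μ.real {ω | m / 2 ≤ |X ω - m|} := by
        refine measureReal_mono (fun ω (hω : X ω ≤ m / 2) => ?_)
        rw [Set.mem_ofPred_eq, abs_sub_comm]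
        exact le_abs.mpr (Or.inl (by linarith))
    _ ≤ variance X μ / (m / 2) ^ 2 :=
        ENNReal.toReal_le_of_le_ofReal (div_nonneg (variance_nonneg _ _) (sq_nonneg _)) hcheb
    _ ≤ m * (M - m) / (m / 2) ^ 2 := by gcongr
    _ = 4 * (M - m) / m := by field_simp; ring

/-- `Y_k = X_(k) / X_(1)` when `x` lists the logarithmic gaps; `k = 0` and `k = 1` both give `1`. -/
noncomputable def rankedRatio (x : ℕ → ℝ) (k : ℕ) : ℝ := exp (-(∑ j ∈ range (k - 1), x j))

/-- `∑_{3 ≤ k ≤ N} Y_k / Y_{N+1}`. -/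
noncomputable def tailRatioSum (x : ℕ → ℝ) (N : ℕ) : ℝ := ∑ i ∈ Ico 2 N, exp (∑ j ∈ Ico i N, x j)

section RankedRatio

variable {x : ℕ → ℝ} {i k n N : ℕ}

lemma rankedRatio_pos : 0 < rankedRatio x k := exp_pos _

lemma rankedRatio_antitone (hx : ∀ j, 0 ≤ x j) : Antitone (rankedRatio x) := fun k n hkn =>
  exp_le_exp.mpr <| neg_le_neg <| sum_le_sum_of_subset_of_nonneg
    (range_subset_range.mpr (by omega)) fun j _ _ => hx j

lemma natCast_mul_rankedRatio_div_sum_nonneg :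
    0 ≤ n * rankedRatio x n / ∑ k ∈ Icc 1 n, rankedRatio x k :=
  div_nonneg (mul_nonneg n.cast_nonneg rankedRatio_pos.le)
    (sum_nonneg fun _ _ => rankedRatio_pos.le)

lemma natCast_mul_rankedRatio_div_sum_le_one (hx : ∀ j, 0 ≤ x j) :
    n * rankedRatio x n / ∑ k ∈ Icc 1 n, rankedRatio x k ≤ 1 := by
  refine div_le_one_of_le₀ ?_ (sum_nonneg fun k _ => rankedRatio_pos.le)
  calc (n : ℝ) * rankedRatio x n = ∑ _k ∈ Icc 1 n, rankedRatio x n := by simp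
    _ ≤ ∑ k ∈ Icc 1 n, rankedRatio x k :=
        sum_le_sum fun k hk => rankedRatio_antitone hx (mem_Icc.mp hk).2

lemma rankedRatio_succ_eq_mul (hiN : i ≤ N) :
    rankedRatio x (i + 1) = rankedRatio x (N + 1) * exp (∑ j ∈ Ico i N, x j) := by
  rw [rankedRatio, rankedRatio, ← exp_add, Nat.add_sub_cancel, Nat.add_sub_cancel,
    ← sum_range_add_sum_Ico _ hiN]
  ring_nf

lemma rankedRatio_mul_tailRatioSum_le :
    rankedRatio x (N + 1) * tailRatioSum x N ≤ ∑ k ∈ Icc 1 (N + 1), rankedRatio x k := by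
  calc rankedRatio x (N + 1) * tailRatioSum x N = ∑ i ∈ Ico 2 N, rankedRatio x (i + 1) := by
        rw [tailRatioSum, mul_sum]
        exact sum_congr rfl fun i hi => (rankedRatio_succ_eq_mul (mem_Ico.mp hi).2.le).symm
    _ = ∑ k ∈ Ico 3 (N + 1), rankedRatio x k := sum_Ico_add' (rankedRatio x) 2 N 1
    _ ≤ ∑ k ∈ Icc 1 (N + 1), rankedRatio x k :=
        sum_le_sum_of_subset_of_nonneg (fun k hk => by simp at hk ⊢; omega)
          fun k _ _ => rankedRatio_pos.le

lemma natCast_mul_rankedRatio_div_sum_le_ite_add (hx : ∀ j, 0 ≤ x j) {m : ℝ} (hm : 0 < m) :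
    (N + 1 : ℕ) * rankedRatio x (N + 1) / ∑ k ∈ Icc 1 (N + 1), rankedRatio x k
      ≤ (if tailRatioSum x N ≤ m / 2 then 1 else 0) + 2 * (N + 1) / m := by
  split_ifs with hW
  · linarith [natCast_mul_rankedRatio_div_sum_le_one (n := N + 1) hx,
      show 0 ≤ 2 * ((N : ℝ) + 1) / m by positivity]
  · have hY : 0 < rankedRatio x (N + 1) := rankedRatio_pos
    have hsum := rankedRatio_mul_tailRatioSum_le (x := x) (N := N)
    have hYW : rankedRatio x (N + 1) * m ≤ 2 * (rankedRatio x (N + 1) * tailRatioSum x N) := by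
      nlinarith [not_le.mp hW]
    rw [zero_add, div_le_div_iff₀ (by nlinarith) hm]
    push_cast
    nlinarith

end RankedRatio

section ZipfianGaps

variable {Ω : Type*} [MeasurableSpace Ω] {μ : Measure Ω} {E : ℕ → Ω → ℝ} {i N : ℕ}

lemma integrable_exp_sum_Ico (hindep : iIndepFun E μ) (hmeas : ∀ j, Measurable (E j))
    (hdist : ∀ j : ℕ, μ.map (E j) = expMeasure (j + 1)) (hi : 0 < i) :
    Integrable (fun ω => exp (∑ j ∈ Ico i N, E j ω)) μ := by
  simpa only [one_mul] using hindep.integrable_exp_mul_sum_of_map_eq_expMeasure (t := 1) hmeas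
    hdist (fun j _ => by positivity) fun j hj => by have := (mem_Ico.mp hj).1; norm_cast; omega

lemma integral_exp_sum_Ico (hindep : iIndepFun E μ) (hmeas : ∀ j, Measurable (E j))
    (hdist : ∀ j : ℕ, μ.map (E j) = expMeasure (j + 1)) (hi : 0 < i) (hiN : i ≤ N) :
    ∫ ω, exp (∑ j ∈ Ico i N, E j ω) ∂μ = N / i := by
  simpa only [one_mul, prod_Ico_natCast_add_one_div_sub_one hi hiN] using
    hindep.integral_exp_mul_sum_of_map_eq_expMeasure (t := 1) (s := Ico i N) hmeas hdist
      (fun j _ => by positivity) fun j hj => by have := (mem_Ico.mp hj).1; norm_cast; omega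

lemma integrable_exp_sum_Ico_sq (hindep : iIndepFun E μ) (hmeas : ∀ j, Measurable (E j))
    (hdist : ∀ j : ℕ, μ.map (E j) = expMeasure (j + 1)) (hi : 2 ≤ i) :
    Integrable (fun ω => exp (∑ j ∈ Ico i N, E j ω) ^ 2) μ := by
  simpa only [sq, ← exp_add, ← two_mul] using
    hindep.integrable_exp_mul_sum_of_map_eq_expMeasure (t := 2) hmeas hdist
      (fun j _ => by positivity) fun j hj => by have := (mem_Ico.mp hj).1; norm_cast; omega

lemma integral_exp_sum_Ico_sq (hindep : iIndepFun E μ) (hmeas : ∀ j, Measurable (E j))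
    (hdist : ∀ j : ℕ, μ.map (E j) = expMeasure (j + 1)) (hi : 2 ≤ i) (hiN : i ≤ N) :
    ∫ ω, exp (∑ j ∈ Ico i N, E j ω) ^ 2 ∂μ = N * (N - 1) / (i * (i - 1)) := by
  simpa only [sq, ← exp_add, ← two_mul, prod_Ico_natCast_add_one_div_sub_two hi hiN] using
    hindep.integral_exp_mul_sum_of_map_eq_expMeasure (t := 2) (s := Ico i N) hmeas hdist
      (fun j _ => by positivity) fun j hj => by have := (mem_Ico.mp hj).1; norm_cast; omega

lemma integral_tailRatioSum (hindep : iIndepFun E μ) (hmeas : ∀ j, Measurable (E j))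
    (hdist : ∀ j : ℕ, μ.map (E j) = expMeasure (j + 1)) :
    ∫ ω, tailRatioSum (E · ω) N ∂μ = N * ∑ i ∈ Ico 2 N, 1 / (i : ℝ) := by
  unfold tailRatioSum
  rw [integral_finsetSum _ fun i hi =>
    integrable_exp_sum_Ico hindep hmeas hdist (by have := (mem_Ico.mp hi).1; omega), mul_sum]
  refine sum_congr rfl fun i hi => ?_
  rw [integral_exp_sum_Ico hindep hmeas hdist (by have := (mem_Ico.mp hi).1; omega)
    (mem_Ico.mp hi).2.le, mul_one_div]

lemma memLp_tailRatioSum (hindep : iIndepFun E μ) (hmeas : ∀ j, Measurable (E j))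
    (hdist : ∀ j : ℕ, μ.map (E j) = expMeasure (j + 1)) :
    MemLp (fun ω => tailRatioSum (E · ω) N) 2 μ :=
  memLp_finsetSum _ fun i hi => (memLp_two_iff_integrable_sq (by fun_prop)).mpr
    (integrable_exp_sum_Ico_sq hindep hmeas hdist (mem_Ico.mp hi).1)

lemma integral_tailRatioSum_sq_le (hindep : iIndepFun E μ) (hmeas : ∀ j, Measurable (E j))
    (hdist : ∀ j : ℕ, μ.map (E j) = expMeasure (j + 1)) :
    ∫ ω, tailRatioSum (E · ω) N ^ 2 ∂μ
      ≤ (N * ∑ i ∈ Ico 2 N, 1 / (i : ℝ)) * (N * ∑ i ∈ Ico 2 N, 1 / ((i : ℝ) - 1)) := by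
  -- Cauchy–Schwarz with weights `N / (i - 1)`, upper bounds for the `L²`-norms of the summands
  set w : ℕ → ℝ := fun i => N / ((i : ℝ) - 1)
  have hw : ∀ i ∈ Ico 2 N, 0 < w i := fun i hi => by
    have := mem_Ico.mp hi
    have : (2 : ℝ) ≤ i := by exact_mod_cast this.1
    have : (0 : ℝ) < N := by exact_mod_cast (by omega : 0 < N)
    exact div_pos this (by linarith)
  have hsq_int : ∀ i ∈ Ico 2 N, Integrable (fun ω => exp (∑ j ∈ Ico i N, E j ω) ^ 2 / w i) μ :=
    fun i hi => (integrable_exp_sum_Ico_sq hindep hmeas hdist (mem_Ico.mp hi).1).div_const _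
  have hcs : ∀ ω, tailRatioSum (E · ω) N ^ 2
      ≤ (∑ i ∈ Ico 2 N, w i) * ∑ i ∈ Ico 2 N, exp (∑ j ∈ Ico i N, E j ω) ^ 2 / w i :=
    fun ω => sum_sq_le_sum_mul_sum_of_sq_le_mul _ (fun i hi => (hw i hi).le)
      (fun i hi => div_nonneg (sq_nonneg _) (hw i hi).le)
      fun i hi => (mul_div_cancel₀ _ (hw i hi).ne').ge
  calc ∫ ω, tailRatioSum (E · ω) N ^ 2 ∂μ
      ≤ ∫ ω, (∑ i ∈ Ico 2 N, w i) * ∑ i ∈ Ico 2 N, exp (∑ j ∈ Ico i N, E j ω) ^ 2 / w i ∂μ :=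
        integral_mono_of_nonneg (ae_of_all _ fun ω => sq_nonneg _)
          ((integrable_finsetSum _ hsq_int).const_mul _) (ae_of_all _ hcs)
    _ = (∑ i ∈ Ico 2 N, w i) * ∑ i ∈ Ico 2 N, (N - 1) / (i : ℝ) := by
        rw [integral_const_mul, integral_finsetSum _ hsq_int]
        congr 1
        refine sum_congr rfl fun i hi => ?_
        have hi' := mem_Ico.mp hi
        have : (2 : ℝ) ≤ i := by exact_mod_cast hi'.1
        have : (0 : ℝ) < N := by exact_mod_cast (by omega : 0 < N)
        rw [integral_div, integral_exp_sum_Ico_sq hindep hmeas hdist hi'.1 hi'.2.le]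
        have : (i : ℝ) - 1 ≠ 0 := by linarith
        simp only [w]
        field_simp
    _ ≤ (∑ i ∈ Ico 2 N, w i) * ∑ i ∈ Ico 2 N, N * (1 / (i : ℝ)) := by
        gcongr with i hi
        · exact sum_nonneg fun i hi => (hw i hi).le
        · rw [mul_one_div]
          gcongr
          linarith
    _ = _ := by
        simp only [w, ← mul_sum, div_eq_mul_one_div (N : ℝ)]
        ring

lemma integral_natCast_mul_rankedRatio_div_sum_le
    (hindep : iIndepFun E μ) (hmeas : ∀ j, Measurable (E j))
    (hdist : ∀ j : ℕ, μ.map (E j) = expMeasure (j + 1)) (hN : 3 ≤ N) :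
    ∫ ω, (N + 1 : ℕ) * rankedRatio (E · ω) (N + 1)
        / ∑ k ∈ Icc 1 (N + 1), rankedRatio (E · ω) k ∂μ
      ≤ 8 / ∑ i ∈ Ico 2 N, 1 / (i : ℝ) := by
  have := hindep.isProbabilityMeasure
  set h := ∑ i ∈ Ico 2 N, 1 / (i : ℝ)
  set m := N * h
  have hN' : (3 : ℝ) ≤ N := by exact_mod_cast hN
  have hh : 0 < h := sum_pos (fun i hi => by have := (mem_Ico.mp hi).1; positivity)
    ⟨2, mem_Ico.mpr ⟨le_rfl, hN⟩⟩
  have hm : 0 < m := by positivity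
  have hgaps : ∀ᵐ ω ∂μ, ∀ j, 0 ≤ E j ω :=
    ae_all_iff.mpr fun j => ae_nonneg_of_map_eq_expMeasure (hmeas j).aemeasurable (hdist j)
  have hW : Measurable fun ω => tailRatioSum (E · ω) N := by unfold tailRatioSum; fun_prop
  have hsmall : μ.real {ω | tailRatioSum (E · ω) N ≤ m / 2} ≤ 4 * N / m := by
    refine (measureReal_le_half_le_of_integral_sq_le (memLp_tailRatioSum hindep hmeas hdist)
      (integral_tailRatioSum hindep hmeas hdist) hm
      (integral_tailRatioSum_sq_le hindep hmeas hdist)).trans ?_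
    have := sum_Ico_two_one_div_pred_le (by omega : 2 ≤ N)
    gcongr
    nlinarith
  calc _ ≤ ∫ ω, {ω | tailRatioSum (E · ω) N ≤ m / 2}.indicator 1 ω + 2 * (N + 1) / m ∂μ := by
        refine integral_mono_of_nonneg (ae_of_all _ fun ω => natCast_mul_rankedRatio_div_sum_nonneg)
          (((integrable_const 1).indicator (measurableSet_le hW measurable_const)).add
            (integrable_const _)) (hgaps.mono fun ω hω => ?_)
        simpa [Set.indicator_apply] using natCast_mul_rankedRatio_div_sum_le_ite_add hω hm
    _ = μ.real {ω | tailRatioSum (E · ω) N ≤ m / 2} + 2 * (N + 1) / m := by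
        rw [integral_add ((integrable_const 1).indicator (measurableSet_le hW measurable_const))
          (integrable_const _), integral_indicator_one (measurableSet_le hW measurable_const),
          integral_const, probReal_univ, one_smul]
    _ ≤ 4 * N / m + 2 * (N + 1) / m := by gcongr
    _ ≤ 8 / h := by
        rw [← add_div, div_le_div_iff₀ hm hh]
        nlinarith

end ZipfianGaps

theorem zipfian_atlas_completeness_in_expectation_general
    {Ω : Type*} [MeasureSpace Ω]
    (E : ℕ → Ω → ℝ)
    (hmeas : ∀ k, Measurable (E k))
    (hindep : iIndepFun E ℙ)
    (hdist : ∀ k : ℕ, Measure.map (E k) ℙ = expMeasure (k + 1))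
    (Y : ℕ → Ω → ℝ)
    (hY : ∀ n : ℕ, ∀ ω, Y n ω = Real.exp (-(∑ k ∈ Finset.range (n - 1), E k ω))) :
    Tendsto (fun n : ℕ =>
        ∫ ω, (n : ℝ) * Y n ω / (∑ k ∈ Finset.Icc 1 n, Y k ω) ∂(ℙ : Measure Ω))
      atTop (nhds 0) := by
  obtain rfl : Y = fun n ω => rankedRatio (E · ω) n := funext fun n => funext (hY n)
  refine (tendsto_add_atTop_iff_nat 1).mp <| squeeze_zero'
    (Eventually.of_forall fun N => integral_nonneg fun ω => natCast_mul_rankedRatio_div_sum_nonneg)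
    ((eventually_ge_atTop 3).mono fun N hN =>
      integral_natCast_mul_rankedRatio_div_sum_le hindep hmeas hdist hN)
    (tendsto_const_nhds.div_atTop tendsto_sum_Ico_two_one_div_atTop)

/-- The expectations `E[n·Y_n / (Y_1 + ⋯ + Y_n)]` converge to `0`, where
`Y_n = exp(−(E_1 + ⋯ + E_{n−1}))` and the `E_k` are independent, exponentially
distributed with rate `k`. Here `E k` stands for the variable of index `k + 1`. -/
theorem zipfian_atlas_completeness_in_expectation
    {Ω : Type*} [MeasureSpace Ω] [IsProbabilityMeasure (ℙ : Measure Ω)]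
    (E : ℕ → Ω → ℝ)
    (hmeas : ∀ k, Measurable (E k))
    (hindep : iIndepFun E ℙ)
    (hdist : ∀ k : ℕ, Measure.map (E k) ℙ = expMeasure (k + 1))
    (Y : ℕ → Ω → ℝ)
    (hY : ∀ n : ℕ, ∀ ω, Y n ω = Real.exp (-(∑ k ∈ Finset.range (n - 1), E k ω))) :
    Tendsto (fun n : ℕ =>
        ∫ ω, (n : ℝ) * Y n ω / (∑ k ∈ Finset.Icc 1 n, Y k ω) ∂(ℙ : Measure Ω))
      atTop (nhds 0) :=
  zipfian_atlas_completeness_in_expectation_general E hmeas hindep hdist Y hY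
end

section
/- Let g > 0 and let (σ_k²)_{k≥1} be a nondecreasing sequence of positive real numbers, and define the slope parameters s_k = (σ_k² + σ_{k+1}²)/(4g) for k ≥ 1. Suppose that for each n ≥ 2 there exist nonnegative weights w_1^{(n)}, …, w_n^{(n)} with w_1^{(n)} + ⋯ + w_n^{(n)} = 1 such that lim_{n→∞} Σ_{k=1}^n w_k^{(n)}·σ_k² = 2g and limsup_{n→∞} w_1^{(n)} ≤ 1/2. Then the sequence (s_k) is nondecreasing, s_1 ≤ 1, and either s_k → ∞ as k → ∞ or lim_{k→∞} s_k ≥ 1. -/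
/-!
Monotonicity of `s` is that of `σ²`. For `s₁ ≤ 1`: splitting off the top rank, the weighted
average of the `σₖ²` is at least `w₁ σ₁² + (1 - w₁) σ₂²`, which decreases in `w₁`; passing to the
limit with `limsup w₁ ≤ 1/2` gives `(σ₁² + σ₂²)/2 ≤ 2g`. Finally `s` converges or diverges as a
monotone sequence, and if `s → L` then every `σₖ² ≤ 2g sₖ ≤ 2g L`, so the averages, whose limit
is `2g`, are at most `2g L`.
-/

open Filter Set Topology

section WeightedSum

variable {ι : Type*} {t : Finset ι} {w f : ι → ℝ}

lemma sum_mul_le_of_forall_le {M : ℝ} (hw : ∀ i ∈ t, 0 ≤ w i) (hf : ∀ i ∈ t, f i ≤ M) :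
    ∑ i ∈ t, w i * f i ≤ (∑ i ∈ t, w i) * M := by
  rw [Finset.sum_mul]
  exact Finset.sum_le_sum fun i hi => mul_le_mul_of_nonneg_left (hf i hi) (hw i hi)

lemma le_sum_mul_of_forall_le {m : ℝ} (hw : ∀ i ∈ t, 0 ≤ w i) (hf : ∀ i ∈ t, m ≤ f i) :
    (∑ i ∈ t, w i) * m ≤ ∑ i ∈ t, w i * f i := by
  rw [Finset.sum_mul]
  exact Finset.sum_le_sum fun i hi => mul_le_mul_of_nonneg_left (hf i hi) (hw i hi)

lemma mul_add_le_sum_mul_of_forall_erase_le [DecidableEq ι] {a : ι} {m : ℝ} (ha : a ∈ t)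
    (hw : ∀ i ∈ t, 0 ≤ w i) (hf : ∀ i ∈ t.erase a, m ≤ f i) :
    w a * f a + (∑ i ∈ t, w i - w a) * m ≤ ∑ i ∈ t, w i * f i := by
  rw [← Finset.add_sum_erase t _ ha, ← Finset.add_sum_erase t _ ha, add_sub_cancel_left]
  gcongr
  exact le_sum_mul_of_forall_le (fun i hi => hw i (Finset.mem_of_mem_erase hi)) hf

end WeightedSum

lemma le_of_tendsto_of_limsup_le_of_antitone {α : Type*} {l : Filter α} [l.NeBot]
    {x a : α → ℝ} {φ : ℝ → ℝ} {p A : ℝ} (hφ : Antitone φ) (hφp : ContinuousWithinAt φ (Ioi p) p)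
    (hx : IsBoundedUnder (· ≤ ·) l x) (hxp : limsup x l ≤ p) (ha : Tendsto a l (𝓝 A))
    (hφa : ∀ᶠ n in l, φ (x n) ≤ a n) : φ p ≤ A := by
  have above : ∀ c ∈ Ioi p, φ c ≤ A := fun c hc =>
    ge_of_tendsto ha <| ((eventually_lt_of_limsup_lt (hxp.trans_lt hc) hx).and hφa).mono
      fun n ⟨hlt, hle⟩ => (hφ hlt.le).trans hle
  exact le_of_tendsto hφp (eventually_nhdsWithin_of_forall above)

section RankWeights

variable {w : ℕ → ℕ → ℝ} {f : ℕ → ℝ} {A : ℝ}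

lemma mul_add_mul_le_of_tendsto_weighted_sum {p : ℝ} (hf : MonotoneOn f (Ici 1))
    (hw_nonneg : ∀ᶠ n in atTop, ∀ k ∈ Finset.Icc 1 n, 0 ≤ w n k)
    (hw_sum : ∀ᶠ n in atTop, ∑ k ∈ Finset.Icc 1 n, w n k = 1)
    (hA : Tendsto (fun n => ∑ k ∈ Finset.Icc 1 n, w n k * f k) atTop (𝓝 A))
    (htop : limsup (fun n => w n 1) atTop ≤ p) :
    p * f 1 + (1 - p) * f 2 ≤ A := by
  have hφ : Antitone fun c : ℝ => c * f 1 + (1 - c) * f 2 := fun a b hab => by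
    nlinarith [hf (by simp : 1 ∈ Ici 1) (by simp : 2 ∈ Ici 1) one_le_two]
  have hw_one : ∀ᶠ n in atTop, w n 1 ≤ 1 := by
    filter_upwards [hw_nonneg, hw_sum, eventually_ge_atTop 1] with n hnonneg hsum hn
    rw [← hsum]
    exact Finset.single_le_sum hnonneg (by simpa using hn)
  refine le_of_tendsto_of_limsup_le_of_antitone (φ := fun c => c * f 1 + (1 - c) * f 2) hφ
    (by fun_prop) (isBoundedUnder_of_eventually_le hw_one) htop hA ?_
  filter_upwards [hw_nonneg, hw_sum, eventually_ge_atTop 1] with n hnonneg hsum hn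
  have h2k : ∀ k ∈ (Finset.Icc 1 n).erase 1, f 2 ≤ f k := fun k hk => by
    simp only [Finset.mem_erase, Finset.mem_Icc] at hk
    exact hf (by simp) (by simp; omega) (by omega)
  have h := mul_add_le_sum_mul_of_forall_erase_le (by simpa using hn) hnonneg h2k
  rwa [hsum] at h

lemma le_of_tendsto_weighted_sum_of_forall_le {M : ℝ} (hf : ∀ k ≥ 1, f k ≤ M)
    (hw_nonneg : ∀ᶠ n in atTop, ∀ k ∈ Finset.Icc 1 n, 0 ≤ w n k)
    (hw_sum : ∀ᶠ n in atTop, ∑ k ∈ Finset.Icc 1 n, w n k = 1)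
    (hA : Tendsto (fun n => ∑ k ∈ Finset.Icc 1 n, w n k * f k) atTop (𝓝 A)) : A ≤ M :=
  le_of_tendsto hA <| by
    filter_upwards [hw_nonneg, hw_sum] with n hnonneg hsum
    simpa [hsum] using sum_mul_le_of_forall_le hnonneg fun k hk => hf k (Finset.mem_Icc.1 hk).1

end RankWeights

theorem quasi_zipfian_of_conservative_complete_general
    (g : ℝ) (hg : 0 < g) (σsq : ℕ → ℝ)
    (hσmono : ∀ k : ℕ, 1 ≤ k → σsq k ≤ σsq (k + 1))
    (s : ℕ → ℝ) (hs : ∀ k : ℕ, s k = (σsq k + σsq (k + 1)) / (4 * g))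
    (w : ℕ → ℕ → ℝ)
    (hw_nonneg : ∀ n : ℕ, 2 ≤ n → ∀ k ∈ Finset.Icc 1 n, 0 ≤ w n k)
    (hw_sum : ∀ n : ℕ, 2 ≤ n → ∑ k ∈ Finset.Icc 1 n, w n k = 1)
    (hconserv : Tendsto (fun n : ℕ => ∑ k ∈ Finset.Icc 1 n, w n k * σsq k)
      atTop (nhds (2 * g)))
    (htop : limsup (fun n : ℕ => w n 1) atTop ≤ 1 / 2) :
    (∀ k : ℕ, 1 ≤ k → s k ≤ s (k + 1)) ∧ s 1 ≤ 1 ∧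
      (Tendsto s atTop atTop ∨ ∃ L : ℝ, Tendsto s atTop (nhds L) ∧ 1 ≤ L) := by
  have hσ : MonotoneOn σsq (Ici 1) := monotoneOn_nat_Ici_of_le_succ hσmono
  have hs_mono : MonotoneOn s (Ici 1) := fun i hi j hj hij => by
    rw [hs, hs]
    gcongr <;> exact hσ (by simp_all) (by simp_all) (by omega)
  have hs_mono' : Monotone fun k => s (k + 1) := monotone_add_nat_iff_monotoneOn_nat_Ici.2 hs_mono
  have hw_nonneg' := eventually_atTop.2 ⟨2, hw_nonneg⟩
  have hw_sum' := eventually_atTop.2 ⟨2, hw_sum⟩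
  refine ⟨fun k hk => hs_mono hk (by simp) k.le_succ, ?_, ?_⟩
  · have := mul_add_mul_le_of_tendsto_weighted_sum hσ hw_nonneg' hw_sum' hconserv htop
    rw [hs, div_le_one (by positivity)]
    linarith
  rcases tendsto_atTop_of_monotone hs_mono' with hlim | ⟨L, hlim⟩
  · exact .inl ((tendsto_add_atTop_iff_nat 1).1 hlim)
  refine .inr ⟨L, (tendsto_add_atTop_iff_nat 1).1 hlim, ?_⟩
  have hσL : ∀ k ≥ 1, σsq k ≤ 2 * g * L := fun k hk => by
    have hsL : s k ≤ L := by simpa [Nat.sub_add_cancel hk] using hs_mono'.ge_of_tendsto hlim (k - 1)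
    rw [hs, div_le_iff₀ (by positivity)] at hsL
    linarith [hσmono k hk]
  exact (le_mul_iff_one_le_right (by positivity)).1 <|
    le_of_tendsto_weighted_sum_of_forall_le hσL hw_nonneg' hw_sum' hconserv

/-- Analytic core of Proposition 2: for a simple first-order family with nondecreasing
variances `σ_k²` and slope parameters `s_k = (σ_k² + σ_{k+1}²)/(4g)`, if there are
weights summing to 1 whose variance-weighted averages tend to `2g` and whose top weight
has limsup at most `1/2`, then `(s_k)` is nondecreasing, `s_1 ≤ 1`, and either
`s_k → ∞` or `lim s_k ≥ 1`. -/
theorem quasi_zipfian_of_conservative_complete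
    (g : ℝ) (hg : 0 < g) (σsq : ℕ → ℝ)
    (hσpos : ∀ k : ℕ, 1 ≤ k → 0 < σsq k)
    (hσmono : ∀ k : ℕ, 1 ≤ k → σsq k ≤ σsq (k + 1))
    (s : ℕ → ℝ) (hs : ∀ k : ℕ, s k = (σsq k + σsq (k + 1)) / (4 * g))
    (w : ℕ → ℕ → ℝ)
    (hw_nonneg : ∀ n : ℕ, 2 ≤ n → ∀ k ∈ Finset.Icc 1 n, 0 ≤ w n k)
    (hw_sum : ∀ n : ℕ, 2 ≤ n → ∑ k ∈ Finset.Icc 1 n, w n k = 1)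
    (hconserv : Tendsto (fun n : ℕ => ∑ k ∈ Finset.Icc 1 n, w n k * σsq k)
      atTop (nhds (2 * g)))
    (htop : limsup (fun n : ℕ => w n 1) atTop ≤ 1 / 2) :
    (∀ k : ℕ, 1 ≤ k → s k ≤ s (k + 1)) ∧ s 1 ≤ 1 ∧
      (Tendsto s atTop atTop ∨ ∃ L : ℝ, Tendsto s atTop (nhds L) ∧ 1 ≤ L) :=
  quasi_zipfian_of_conservative_complete_general g hg σsq hσmono s hs w hw_nonneg hw_sum hconserv
    htop
end
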